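/- arXiv:2301.11820 — 2 statements merged into one kernel-verified Lean document; each statement's English description precedes it below -/
import Mathlib

section
/- Let T be a Turing machine with states Q, alphabet Σ, and transition function δ, and let Δ: (Q∖{q_halt}) × Σ^ℤ → Q × Σ^ℤ be its global transition function (apply δ to (q, t_0), write the new symbol at position 0, then shift the tape by ε ∈ {−1,0,+1}). If T is reversible (Δ is injective), then the countable generalized shift with pairs P₂ = {(−1, (t_{−1} q t_0)) : t_{−1}, t_0 ∈ Σ, q ∈ Q∖{q_halt}}, replacement J((−1,(t_{−1} q t_0))) = (t_{−1} t' q') if ε=+1, (q' t_{−1} t') if ε=−1, (t_{−1} q' t') if ε=0 where δ(q,t_0) = (q',t',ε), and shift H = ε, is injective on S_{P₂}, and it simulates Δ under the encoding (q, t) ↦ (...t_{−1}.q t_0 t_1...) ∈ (Q ⊔ Σ)^ℤ. -/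
/-- `s` coincides with the pair `p = (n, I)` if the symbols of `s` at positions
`n, ..., n + |I| - 1` form the word `I`. -/
def Coincides {A : Type*} (s : ℤ → A) (p : ℤ × List A) : Prop :=
  ∀ (i : ℕ) (hi : i < p.2.length), s (p.1 + i) = p.2.get ⟨i, hi⟩

/-- The set of sequences coinciding with some pair of `P`. -/
def SP {A : Type*} (P : Set (ℤ × List A)) : Set (ℤ → A) :=
  {s | ∃ p ∈ P, Coincides s p}

/-- Every sequence coincides with at most one pair of `P`
(the defining condition of a countable generalized shift). -/
def AtMostOne {A : Type*} (P : Set (ℤ × List A)) : Prop :=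
  ∀ s : ℤ → A, ∀ p ∈ P, ∀ q ∈ P, Coincides s p → Coincides s q → p = q

/-- Replace the symbols of `s` at positions `n, ..., n + |w| - 1` by the word `w`. -/
noncomputable def replaceWord {A : Type*} (s : ℤ → A) (n : ℤ) (w : List A) : ℤ → A :=
  fun k => if h : 0 ≤ k - n ∧ (k - n).toNat < w.length
    then w.get ⟨(k - n).toNat, h.2⟩ else s k

open scoped Classical in
/-- The countable generalized shift determined by the data `(P, J, H)`: if `s`
coincides with a (necessarily unique, when `AtMostOne P` holds) pair `p ∈ P`, replace
the word of `p` in `s` by `J p` and shift by `H p` (position `k` of the image is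
position `k + H p` of the replaced sequence); otherwise leave `s` unchanged. -/
noncomputable def cgsApply {A : Type*} (P : Set (ℤ × List A)) (J : ℤ × List A → List A)
    (H : ℤ × List A → ℤ) (s : ℤ → A) : ℤ → A :=
  if h : ∃ p ∈ P, Coincides s p then
    fun k => replaceWord s h.choose.1 (J h.choose) (k + H h.choose)
  else s

/-- The global transition function of a Turing machine with transition function `δ`:
apply `δ` to `(q, t₀)`, write the new symbol at position `0`, then shift the tape by
`ε ∈ {-1, 0, 1}` (position `k` of the new tape is position `k + ε` of the old). -/
def tmStep {Q S : Type*} [DecidableEq S] (δ : Q × S → Q × S × ℤ)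
    (c : Q × (ℤ → S)) : Q × (ℤ → S) :=
  ((δ (c.1, c.2 0)).1,
    fun k => Function.update c.2 0 (δ (c.1, c.2 0)).2.1 (k + (δ (c.1, c.2 0)).2.2))

/-- The encoding of a configuration `(q, t)` as the sequence `(...t₋₁ . q t₀ t₁ ...)`
over the alphabet `Q ⊕ Σ`. -/
def tmEnc {Q S : Type*} (c : Q × (ℤ → S)) : ℤ → (Q ⊕ S) :=
  fun k => if k < 0 then Sum.inr (c.2 k)
    else if k = 0 then Sum.inl c.1 else Sum.inr (c.2 (k - 1))

/-- The pairs `P₂ = {(-1, (t₋₁ q t₀)) : t₋₁, t₀ ∈ Σ, q ≠ q_halt}`. -/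
def tmPairs {Q S : Type*} (qhalt : Q) : Set (ℤ × List (Q ⊕ S)) :=
  {pr | ∃ (a b : S) (q : Q), q ≠ qhalt ∧
    pr = (-1, [Sum.inr a, Sum.inl q, Sum.inr b])}

/-- The replacement map `J` of the countable generalized shift associated with `δ`. -/
def tmJ {Q S : Type*} (δ : Q × S → Q × S × ℤ) :
    ℤ × List (Q ⊕ S) → List (Q ⊕ S) :=
  fun pr => match pr.2 with
  | [Sum.inr a, Sum.inl q, Sum.inr b] =>
      let r := δ (q, b)
      if r.2.2 = 1 then [Sum.inr a, Sum.inr r.2.1, Sum.inl r.1]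
      else if r.2.2 = -1 then [Sum.inl r.1, Sum.inr a, Sum.inr r.2.1]
      else [Sum.inr a, Sum.inl r.1, Sum.inr r.2.1]
  | _ => pr.2

/-- The shift map `H` of the countable generalized shift associated with `δ`. -/
def tmH {Q S : Type*} (δ : Q × S → Q × S × ℤ) : ℤ × List (Q ⊕ S) → ℤ :=
  fun pr => match pr.2 with
  | [Sum.inr _, Sum.inl q, Sum.inr b] => (δ (q, b)).2.2
  | _ => 0

/-!
Reversibility of `Δ` is used through one construction: for a non-halting transition
`δ (q, b) = (q', c, ε)` and any tape `u` with `u (-ε) = c`, the configuration reading `b` whose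
tape is `u` shifted back by `ε` steps to `(q', u)`. Two transitions into the same state `q'`
therefore coincide as soon as one tape `u` serves both; such a `u` exists when their shifts
differ, and also when they write the same symbol. Hence `q'` determines `ε`, and `(q', c)`
determines `(q, b)`. The image of a sequence of `S_{P₂}` shows `q'` at position `0`, so its
shift, then the rewritten window `J p`, then the pair `p`, and finally the sequence itself.
-/
section GeneralizedShift

variable {A : Type*}

@[simp]
lemma coincides_nil (s : ℤ → A) (n : ℤ) : Coincides s (n, []) :=
  fun _ hi => absurd hi (Nat.not_lt_zero _)

@[simp]
lemma coincides_cons (s : ℤ → A) (n : ℤ) (x : A) (w : List A) :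
    Coincides s (n, x :: w) ↔ s n = x ∧ Coincides s (n + 1, w) := by
  constructor
  · intro h
    refine ⟨by simpa using h 0 (by simp), fun i hi => ?_⟩
    simpa [add_assoc, add_comm (1 : ℤ)] using h (i + 1) (by simpa using hi)
  · rintro ⟨h0, h⟩ (_ | i) hi
    · simpa using h0
    · simpa [add_assoc, add_comm (1 : ℤ)] using h i (by simpa using hi)

@[simp]
lemma replaceWord_nil (s : ℤ → A) (n : ℤ) : replaceWord s n [] = s := by
  funext k
  simp [replaceWord]

@[simp]
lemma replaceWord_cons (s : ℤ → A) (n : ℤ) (x : A) (w : List A) :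
    replaceWord s n (x :: w) = Function.update (replaceWord s (n + 1) w) n x := by
  funext k
  rcases eq_or_ne k n with rfl | hk
  · simp [replaceWord]
  · rw [Function.update_of_ne hk]
    simp only [replaceWord, List.length_cons]
    by_cases hj : 0 ≤ k - (n + 1)
    · obtain ⟨j, hj⟩ := Int.eq_ofNat_of_zero_le hj
      have hkn : k - n = ((j + 1 : ℕ) : ℤ) := by push_cast; omega
      simp only [hkn, hj, Int.toNat_natCast]
      simp [show (0 : ℤ) ≤ j + 1 by omega]
    · rw [dif_neg (by omega), dif_neg (by omega)]

lemma replaceWord_of_not_mem_window {s : ℤ → A} {n m : ℤ} {w : List A}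
    (h : ¬(0 ≤ m - n ∧ (m - n).toNat < w.length)) : replaceWord s n w m = s m :=
  dif_neg h

lemma replaceWord_add_natCast {s : ℤ → A} {n : ℤ} {w : List A} {i : ℕ} (hi : i < w.length) :
    replaceWord s n w (n + i) = w.get ⟨i, hi⟩ := by
  simp [replaceWord, hi]

lemma eq_of_replaceWord_eq {s s' : ℤ → A} {n : ℤ} {w w' : List A} (hlen : w.length = w'.length)
    (h : replaceWord s n w = replaceWord s' n w') : w = w' :=
  List.ext_get hlen fun i hi hi' => by
    simpa [replaceWord_add_natCast hi, replaceWord_add_natCast hi'] using congrFun h (n + i)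

lemma eq_of_replaceWord_eq_of_coincides {s s' : ℤ → A} {n : ℤ} {u w : List A}
    (hs : Coincides s (n, u)) (hs' : Coincides s' (n, u)) (hlen : w.length ≤ u.length)
    (h : replaceWord s n w = replaceWord s' n w) : s = s' := by
  funext m
  by_cases hm : 0 ≤ m - n ∧ (m - n).toNat < u.length
  · have hm' : m = n + (m - n).toNat := by omega
    rw [hm', hs _ hm.2, hs' _ hm.2]
  · have hw : ¬(0 ≤ m - n ∧ (m - n).toNat < w.length) := by omega
    calc s m = replaceWord s n w m := (replaceWord_of_not_mem_window hw).symm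
      _ = replaceWord s' n w m := congrFun h m
      _ = s' m := replaceWord_of_not_mem_window hw

variable {P : Set (ℤ × List A)} {J : ℤ × List A → List A} {H : ℤ × List A → ℤ}

lemma cgsApply_of_coincides (hP : AtMostOne P) {s : ℤ → A} {p : ℤ × List A} (hp : p ∈ P)
    (hs : Coincides s p) : cgsApply P J H s = fun k => replaceWord s p.1 (J p) (k + H p) := by
  have h : ∃ p ∈ P, Coincides s p := ⟨p, hp, hs⟩
  rw [cgsApply, dif_pos h, hP s _ h.choose_spec.1 p hp h.choose_spec.2 hs]

lemma replaceWord_eq_of_cgsApply_eq (hP : AtMostOne P) {s s' : ℤ → A} {p p' : ℤ × List A}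
    (hp : p ∈ P) (hp' : p' ∈ P) (hs : Coincides s p) (hs' : Coincides s' p')
    (hH : H p = H p') (h : cgsApply P J H s = cgsApply P J H s') :
    replaceWord s p.1 (J p) = replaceWord s' p'.1 (J p') := by
  rw [cgsApply_of_coincides hP hp hs, cgsApply_of_coincides hP hp' hs', hH] at h
  funext m
  simpa using congrFun h (m - H p')

lemma eq_of_cgsApply_eq_of_coincides (hP : AtMostOne P) {s s' : ℤ → A} {p : ℤ × List A}
    (hp : p ∈ P) (hJ : (J p).length ≤ p.2.length) (hs : Coincides s p) (hs' : Coincides s' p)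
    (h : cgsApply P J H s = cgsApply P J H s') : s = s' :=
  eq_of_replaceWord_eq_of_coincides hs hs' hJ
    (replaceWord_eq_of_cgsApply_eq hP hp hp hs hs' rfl h)

end GeneralizedShift

section ReversibleMachine

variable {Q S : Type*} {δ : Q × S → Q × S × ℤ}

lemma tmStep_update_shift [DecidableEq S] (δ : Q × S → Q × S × ℤ) (q : Q) (b : S) (u : ℤ → S)
    (hu : u (-(δ (q, b)).2.2) = (δ (q, b)).2.1) :
    tmStep δ (q, Function.update (fun k => u (k - (δ (q, b)).2.2)) 0 b) = ((δ (q, b)).1, u) := by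
  refine Prod.ext (by simp [tmStep]) (funext fun k => ?_)
  rcases eq_or_ne (k + (δ (q, b)).2.2) 0 with hk | hk
  · simp [tmStep, ← hu, show k = -(δ (q, b)).2.2 by omega]
  · simp [tmStep, Function.update_of_ne hk]

lemma eq_of_state_eq_of_tape [DecidableEq S] {qhalt : Q}
    (hinj : Set.InjOn (tmStep δ) {c | c.1 ≠ qhalt}) {q q' : Q} {b b' : S}
    (hq : q ≠ qhalt) (hq' : q' ≠ qhalt) (hstate : (δ (q, b)).1 = (δ (q', b')).1) (u : ℤ → S)
    (hu : u (-(δ (q, b)).2.2) = (δ (q, b)).2.1) (hu' : u (-(δ (q', b')).2.2) = (δ (q', b')).2.1) :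
    q = q' ∧ b = b' := by
  have h := hinj hq hq' <| (tmStep_update_shift δ q b u hu).trans <|
    hstate ▸ (tmStep_update_shift δ q' b' u hu').symm
  simp only [Prod.mk.injEq] at h
  exact ⟨h.1, by simpa using congrFun h.2 0⟩

lemma shift_eq_of_state_eq [DecidableEq S] {qhalt : Q}
    (hinj : Set.InjOn (tmStep δ) {c | c.1 ≠ qhalt}) {q q' : Q} {b b' : S}
    (hq : q ≠ qhalt) (hq' : q' ≠ qhalt) (hstate : (δ (q, b)).1 = (δ (q', b')).1) :
    (δ (q, b)).2.2 = (δ (q', b')).2.2 := by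
  by_contra hne
  obtain ⟨rfl, rfl⟩ := eq_of_state_eq_of_tape hinj hq hq' hstate
    (Function.update (fun _ => (δ (q', b')).2.1) (-(δ (q, b)).2.2) (δ (q, b)).2.1) (by simp)
    (by rw [Function.update_of_ne (by omega)])
  exact hne rfl

lemma eq_of_state_eq_of_symbol_eq [DecidableEq S] {qhalt : Q}
    (hinj : Set.InjOn (tmStep δ) {c | c.1 ≠ qhalt}) {q q' : Q} {b b' : S}
    (hq : q ≠ qhalt) (hq' : q' ≠ qhalt) (hstate : (δ (q, b)).1 = (δ (q', b')).1)
    (hsymbol : (δ (q, b)).2.1 = (δ (q', b')).2.1) : q = q' ∧ b = b' :=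
  eq_of_state_eq_of_tape hinj hq hq' hstate (fun _ => (δ (q, b)).2.1) rfl hsymbol

lemma tmPairs_atMostOne (qhalt : Q) : AtMostOne (tmPairs qhalt : Set (ℤ × List (Q ⊕ S))) := by
  rintro s _ ⟨a, b, q, -, rfl⟩ _ ⟨a', b', q', -, rfl⟩ h h'
  simp only [coincides_cons, coincides_nil, and_true] at h h'
  simp_all

lemma coincides_tmEnc (q : Q) (t : ℤ → S) :
    Coincides (tmEnc (q, t)) (-1, [Sum.inr (t (-1)), Sum.inl q, Sum.inr (t 0)]) := by
  simp [tmEnc]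

@[simp]
lemma tmJ_length (n : ℤ) (a : S) (q : Q) (b : S) :
    (tmJ δ (n, [Sum.inr a, Sum.inl q, Sum.inr b])).length = 3 := by
  simp only [tmJ]
  split_ifs <;> rfl

lemma eq_of_tmJ_eq [DecidableEq S] {qhalt : Q} (hinj : Set.InjOn (tmStep δ) {c | c.1 ≠ qhalt})
    {a a' b b' : S} {q q' : Q} (hq : q ≠ qhalt) (hq' : q' ≠ qhalt)
    (hshift : (δ (q, b)).2.2 = (δ (q', b')).2.2)
    (hJ : tmJ δ (-1, [Sum.inr a, Sum.inl q, Sum.inr b])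
      = tmJ δ (-1, [Sum.inr a', Sum.inl q', Sum.inr b'])) :
    a = a' ∧ q = q' ∧ b = b' := by
  simp only [tmJ, ← hshift] at hJ
  have key : a = a' ∧ (δ (q, b)).1 = (δ (q', b')).1 ∧ (δ (q, b)).2.1 = (δ (q', b')).2.1 := by
    split_ifs at hJ <;> simp_all
  obtain ⟨rfl, hstate, hsymbol⟩ := key
  exact ⟨rfl, eq_of_state_eq_of_symbol_eq hinj hq hq' hstate hsymbol⟩

variable (hδrange : ∀ x, (δ x).2.2 = -1 ∨ (δ x).2.2 = 0 ∨ (δ x).2.2 = 1)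
include hδrange

lemma cgsApply_tm_apply_zero {qhalt : Q} {s : ℤ → Q ⊕ S} {a b : S} {q : Q} (hq : q ≠ qhalt)
    (hs : Coincides s (-1, [Sum.inr a, Sum.inl q, Sum.inr b])) :
    cgsApply (tmPairs qhalt) (tmJ δ) (tmH δ) s 0 = Sum.inl (δ (q, b)).1 := by
  rw [cgsApply_of_coincides (tmPairs_atMostOne qhalt) ⟨a, b, q, hq, rfl⟩ hs]
  rcases hδrange (q, b) with h | h | h <;> simp [tmJ, tmH, h]

lemma cgsApply_tmEnc [DecidableEq S] {qhalt : Q} {q : Q} (hq : q ≠ qhalt) (t : ℤ → S) :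
    cgsApply (tmPairs qhalt) (tmJ δ) (tmH δ) (tmEnc (q, t)) = tmEnc (tmStep δ (q, t)) := by
  rw [cgsApply_of_coincides (tmPairs_atMostOne qhalt) ⟨_, _, q, hq, rfl⟩ (coincides_tmEnc q t)]
  funext k
  rcases hδrange (q, t 0) with h | h | h <;>
    simp [tmJ, tmH, h, tmEnc, tmStep, Function.update_apply] <;>
    split_ifs <;> first | rfl | omega | (congr 2; omega)

lemma tmPairs_eq_of_cgsApply_eq [DecidableEq S] {qhalt : Q}
    (hinj : Set.InjOn (tmStep δ) {c | c.1 ≠ qhalt}) {s s' : ℤ → Q ⊕ S}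
    {p p' : ℤ × List (Q ⊕ S)} (hp : p ∈ tmPairs qhalt) (hp' : p' ∈ tmPairs qhalt)
    (hs : Coincides s p) (hs' : Coincides s' p')
    (h : cgsApply (tmPairs qhalt) (tmJ δ) (tmH δ) s
      = cgsApply (tmPairs qhalt) (tmJ δ) (tmH δ) s') : p = p' := by
  obtain ⟨a, b, q, hq, rfl⟩ := id hp
  obtain ⟨a', b', q', hq', rfl⟩ := id hp'
  have hstate : (δ (q, b)).1 = (δ (q', b')).1 := Sum.inl_injective <| by
    rw [← cgsApply_tm_apply_zero hδrange hq hs, h, cgsApply_tm_apply_zero hδrange hq' hs']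
  have hshift := shift_eq_of_state_eq hinj hq hq' hstate
  have hwindow := replaceWord_eq_of_cgsApply_eq (tmPairs_atMostOne qhalt) hp hp' hs hs' hshift h
  have hJ := eq_of_replaceWord_eq (by simp) hwindow
  obtain ⟨rfl, rfl, rfl⟩ := eq_of_tmJ_eq hinj hq hq' hshift hJ
  rfl

end ReversibleMachine

/-- For a reversible Turing machine (injective global transition function `Δ` on
non-halting configurations) the associated countable generalized shift is a genuine
countable generalized shift (each sequence coincides with at most one pair), is
injective on `S_{P₂}`, and simulates `Δ` under the encoding
`(q, t) ↦ (...t₋₁ . q t₀ t₁ ...)`. -/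
theorem reversible_tm_cgs {Q S : Type*} [DecidableEq S] (qhalt : Q)
    (δ : Q × S → Q × S × ℤ)
    (hδrange : ∀ x, (δ x).2.2 = -1 ∨ (δ x).2.2 = 0 ∨ (δ x).2.2 = 1)
    (hΔinj : ∀ c c' : Q × (ℤ → S), c.1 ≠ qhalt → c'.1 ≠ qhalt →
      tmStep δ c = tmStep δ c' → c = c') :
    AtMostOne (tmPairs qhalt : Set (ℤ × List (Q ⊕ S))) ∧
    Set.InjOn (cgsApply (tmPairs qhalt) (tmJ δ) (tmH δ)) (SP (tmPairs qhalt)) ∧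
    ∀ (q : Q) (t : ℤ → S), q ≠ qhalt →
      cgsApply (tmPairs qhalt) (tmJ δ) (tmH δ) (tmEnc (q, t))
        = tmEnc (tmStep δ (q, t)) := by
  have hP := tmPairs_atMostOne (S := S) qhalt
  refine ⟨hP, ?_, fun q t hq => cgsApply_tmEnc hδrange hq t⟩
  rintro s ⟨p, hp, hs⟩ s' ⟨p', hp', hs'⟩ h
  obtain rfl := tmPairs_eq_of_cgsApply_eq hδrange (fun c hc c' hc' => hΔinj c c' hc hc') hp hp'
    hs hs' h
  obtain ⟨a, b, q, -, rfl⟩ := hp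
  exact eq_of_cgsApply_eq_of_coincides hP hp' (tmJ_length _ a q b).le hs hs' h
end

section
/- Let (T,a) be a Turing machine with advice a = {a_n}, where a_n ∈ Σ^{p(n)} for an increasing function p, the first symbol of each advice string a_n is 0, and inputs of size n are tapes (...0.t_0...t_n 0...) with t_i ≠ 0 for 0 ≤ i ≤ n. Consider the countable generalized shift pairs P₁ = {(−1, (d q_0 t_0...t_n d 0^{p(n)−1})) : n ∈ ℕ, t_i ≠ 0}, over alphabet A = Q ∪ Σ ∪ {d}, with J((−1, (d q_0 t_0...t_n d 0^{p(n)−1}))) = (0 q_0 t_0...t_n a_1^n...a_{p(n)}^n) and H ≡ 0. Then the induced map on S_{P₁} is injective: distinct sequences in S_{P₁} have distinct images. -/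
/-- The pairs `P₁` of the advice-loading step: over the alphabet
`A = Q ⊕ (Σ ⊕ {d})` (with `d` the fresh marker), for each `n` and each input word
`t₀...tₙ` of nonblank symbols, the pair
`(-1, (d q₀ t₀...tₙ d 0^{p(n)-1}))`. -/
def advicePairs {Q S : Type*} (q0 : Q) (zero : S) (p : ℕ → ℕ) :
    Set (ℤ × List (Q ⊕ (S ⊕ Unit))) :=
  {pr | ∃ (n : ℕ) (t : List S), t.length = n + 1 ∧ (∀ x ∈ t, x ≠ zero) ∧
    pr = (-1,
      [Sum.inr (Sum.inr ()), Sum.inl q0]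
        ++ t.map (fun x => Sum.inr (Sum.inl x))
        ++ [Sum.inr (Sum.inr ())]
        ++ List.replicate (p n - 1) (Sum.inr (Sum.inl zero)))}

/-!
Both images start, at position `-1`, with the loaded word `0 q₀ t₀…tₙ a₁ⁿ…`. The input symbols
are nonblank and `a₁ⁿ = 0`, so the first blank after `q₀` sits right after the input: equal
images force equal `n` and `t`. The loaded word is exactly as long as the marked word
`d q₀ t₀…tₙ d 0^{p(n)-1}` that both sequences carry there, so the map changes nothing outside it,
and the sequences agree everywhere.
-/

section ReplaceWord

variable {A : Type*}

theorem replaceWord_add_of_lt (s : ℤ → A) (n : ℤ) (w : List A) {i : ℕ} (hi : i < w.length) :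
    replaceWord s n w (n + i) = w[i] := by
  simp [replaceWord, hi]

theorem replaceWord_of_lt_or_le (s : ℤ → A) (n : ℤ) (w : List A) {k : ℤ}
    (hk : k < n ∨ n + w.length ≤ k) : replaceWord s n w k = s k := by
  rw [replaceWord, dif_neg]
  omega

theorem getElem_eq_of_replaceWord_eq {s₁ s₂ : ℤ → A} {n : ℤ} {w₁ w₂ : List A}
    (h : replaceWord s₁ n w₁ = replaceWord s₂ n w₂) {i : ℕ} (h₁ : i < w₁.length)
    (h₂ : i < w₂.length) : w₁[i] = w₂[i] := by
  rw [← replaceWord_add_of_lt s₁ n w₁ h₁, ← replaceWord_add_of_lt s₂ n w₂ h₂, h]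

theorem eq_of_replaceWord_eq_s17 {s₁ s₂ : ℤ → A} {n : ℤ} {v w : List A}
    (hs₁ : Coincides s₁ (n, w)) (hs₂ : Coincides s₂ (n, w)) (hvw : v.length ≤ w.length)
    (h : replaceWord s₁ n v = replaceWord s₂ n v) : s₁ = s₂ := by
  funext k
  by_cases hk : n ≤ k ∧ k < n + w.length
  · obtain ⟨i, rfl⟩ : ∃ i : ℕ, k = n + i := ⟨(k - n).toNat, by omega⟩
    have hi : i < w.length := by omega
    rw [hs₁ i hi, hs₂ i hi]
  · have hk' : k < n ∨ n + v.length ≤ k := by omega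
    rw [← replaceWord_of_lt_or_le s₁ n v hk', ← replaceWord_of_lt_or_le s₂ n v hk', h]

end ReplaceWord

theorem exists_coincides_cgsApply_eq {A : Type*} {P : Set (ℤ × List A)}
    (J : ℤ × List A → List A) (H : ℤ × List A → ℤ) {s : ℤ → A} (hs : s ∈ SP P) :
    ∃ pr ∈ P, Coincides s pr ∧
      cgsApply P J H s = fun k => replaceWord s pr.1 (J pr) (k + H pr) := by
  classical
  have hs' : ∃ pr ∈ P, Coincides s pr := hs
  exact ⟨hs'.choose, hs'.choose_spec.1, hs'.choose_spec.2, by rw [cgsApply, dif_pos hs']⟩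

theorem List.length_le_of_getElem_append_eq {S : Type*} {z : S} {t₁ t₂ b₁ b₂ : List S}
    (ht₂ : ∀ x ∈ t₂, x ≠ z) (hb₁ : b₁.head? = some z)
    (h : ∀ i (h₁ : i < (t₁ ++ b₁).length) (h₂ : i < (t₂ ++ b₂).length),
      (t₁ ++ b₁)[i] = (t₂ ++ b₂)[i]) : t₂.length ≤ t₁.length := by
  by_contra! hlt
  obtain ⟨b₁, rfl⟩ := List.head?_eq_some_iff.mp hb₁
  have := h t₁.length (by simp) (by simp; omega)
  rw [List.getElem_append_right le_rfl, List.getElem_append_left hlt] at this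
  exact ht₂ _ (List.getElem_mem hlt) (by simpa using this.symm)

theorem List.eq_of_getElem_append_eq {S : Type*} {z : S} {t₁ t₂ b₁ b₂ : List S}
    (ht₁ : ∀ x ∈ t₁, x ≠ z) (ht₂ : ∀ x ∈ t₂, x ≠ z)
    (hb₁ : b₁.head? = some z) (hb₂ : b₂.head? = some z)
    (h : ∀ i (h₁ : i < (t₁ ++ b₁).length) (h₂ : i < (t₂ ++ b₂).length),
      (t₁ ++ b₁)[i] = (t₂ ++ b₂)[i]) : t₁ = t₂ := by
  have hlen : t₁.length = t₂.length :=
    le_antisymm (length_le_of_getElem_append_eq ht₁ hb₂ fun i h₁ h₂ => (h i h₂ h₁).symm)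
      (length_le_of_getElem_append_eq ht₂ hb₁ h)
  refine List.ext_getElem hlen fun i h₁ h₂ => ?_
  have := h i (by simp; omega) (by simp; omega)
  rwa [List.getElem_append_left h₁, List.getElem_append_left h₂] at this

section Advice

variable {Q S : Type*} (q0 : Q) (zero : S)

def markedInput (p : ℕ → ℕ) (n : ℕ) (t : List S) : List (Q ⊕ (S ⊕ Unit)) :=
  [Sum.inr (Sum.inr ()), Sum.inl q0]
    ++ t.map (fun x => Sum.inr (Sum.inl x))
    ++ [Sum.inr (Sum.inr ())]
    ++ List.replicate (p n - 1) (Sum.inr (Sum.inl zero))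

def loadedInput (a : ℕ → List S) (n : ℕ) (t : List S) : List (Q ⊕ (S ⊕ Unit)) :=
  [Sum.inr (Sum.inl zero), Sum.inl q0]
    ++ t.map (fun x => Sum.inr (Sum.inl x))
    ++ (a n).map (fun x => Sum.inr (Sum.inl x))

theorem loadedInput_eq_cons (a : ℕ → List S) (n : ℕ) (t : List S) :
    loadedInput q0 zero a n t =
      Sum.inr (Sum.inl zero) :: Sum.inl q0 :: (t ++ a n).map (fun x => Sum.inr (Sum.inl x)) := by
  simp [loadedInput]

theorem length_loadedInput_le_length_markedInput {p : ℕ → ℕ} {a : ℕ → List S}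
    (ha : ∀ n, (a n).length = p n) (ha0 : ∀ n, (a n).head? = some zero) (n : ℕ) (t : List S) :
    (loadedInput q0 zero a n t).length ≤ (markedInput q0 zero p n t).length := by
  have : 0 < (a n).length := List.length_pos_iff.mpr fun h => by simpa [h] using ha0 n
  simp only [loadedInput, markedInput, List.length_append, List.length_map, List.length_cons,
    List.length_nil, List.length_replicate, ha] at this ⊢
  omega

theorem eq_of_getElem_loadedInput_eq {a : ℕ → List S} (ha0 : ∀ n, (a n).head? = some zero)
    {n₁ n₂ : ℕ} {t₁ t₂ : List S} (ht₁ : ∀ x ∈ t₁, x ≠ zero) (ht₂ : ∀ x ∈ t₂, x ≠ zero)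
    (h : ∀ i (h₁ : i < (loadedInput q0 zero a n₁ t₁).length)
      (h₂ : i < (loadedInput q0 zero a n₂ t₂).length),
      (loadedInput q0 zero a n₁ t₁)[i] = (loadedInput q0 zero a n₂ t₂)[i]) : t₁ = t₂ := by
  refine List.eq_of_getElem_append_eq ht₁ ht₂ (ha0 n₁) (ha0 n₂) fun i h₁ h₂ => ?_
  have := h (i + 2) (by simp [loadedInput_eq_cons] at h₁ ⊢; omega)
    (by simp [loadedInput_eq_cons] at h₂ ⊢; omega)
  simp only [loadedInput_eq_cons, List.getElem_cons_succ, List.getElem_map] at this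
  exact Sum.inl_injective (Sum.inr_injective this)

end Advice

theorem advice_cgs_injective_general {Q S : Type*} (q0 : Q) (zero : S)
    (p : ℕ → ℕ)
    (a : ℕ → List S) (ha : ∀ n, (a n).length = p n)
    (ha0 : ∀ n, (a n).head? = some zero)
    (J : ℤ × List (Q ⊕ (S ⊕ Unit)) → List (Q ⊕ (S ⊕ Unit)))
    (hJ : ∀ (n : ℕ) (t : List S), t.length = n + 1 → (∀ x ∈ t, x ≠ zero) →
      J (-1,
        [Sum.inr (Sum.inr ()), Sum.inl q0]
          ++ t.map (fun x => Sum.inr (Sum.inl x))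
          ++ [Sum.inr (Sum.inr ())]
          ++ List.replicate (p n - 1) (Sum.inr (Sum.inl zero)))
      = [Sum.inr (Sum.inl zero), Sum.inl q0]
          ++ t.map (fun x => Sum.inr (Sum.inl x))
          ++ (a n).map (fun x => Sum.inr (Sum.inl x))) :
    Set.InjOn (cgsApply (advicePairs q0 zero p) J (fun _ => 0))
      (SP (advicePairs q0 zero p)) := by
  intro s₁ hs₁ s₂ hs₂ himg
  obtain ⟨_, ⟨n₁, t₁, hn₁, ht₁, rfl⟩, hc₁, he₁⟩ := exists_coincides_cgsApply_eq J (fun _ => 0) hs₁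
  obtain ⟨_, ⟨n₂, t₂, hn₂, ht₂, rfl⟩, hc₂, he₂⟩ := exists_coincides_cgsApply_eq J (fun _ => 0) hs₂
  simp only [add_zero, hJ _ _ hn₁ ht₁, hJ _ _ hn₂ ht₂] at he₁ he₂
  rw [he₁, he₂] at himg
  obtain rfl : t₁ = t₂ := eq_of_getElem_loadedInput_eq q0 zero ha0 ht₁ ht₂
    fun _ h₁ h₂ => getElem_eq_of_replaceWord_eq himg h₁ h₂
  obtain rfl : n₁ = n₂ := by omega
  exact eq_of_replaceWord_eq_s17 hc₁ hc₂
    (length_loadedInput_le_length_markedInput q0 zero ha ha0 n₁ t₁) himg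

/-- The advice-loading countable generalized shift, with
`J((-1, d q₀ t₀...tₙ d 0^{p(n)-1})) = (0 q₀ t₀...tₙ a₁ⁿ...a_{p(n)}ⁿ)` and no shift,
is injective on `S_{P₁}`: here `p` is increasing with `p n ≥ 1`, the advice string
`a n` has length `p n` and first symbol the blank `0`, and input symbols are
nonblank. -/
theorem advice_cgs_injective {Q S : Type*} (q0 : Q) (zero : S)
    (p : ℕ → ℕ) (hp : StrictMono p) (hp1 : ∀ n, 1 ≤ p n)
    (a : ℕ → List S) (ha : ∀ n, (a n).length = p n)
    (ha0 : ∀ n, (a n).head? = some zero)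
    (J : ℤ × List (Q ⊕ (S ⊕ Unit)) → List (Q ⊕ (S ⊕ Unit)))
    (hJ : ∀ (n : ℕ) (t : List S), t.length = n + 1 → (∀ x ∈ t, x ≠ zero) →
      J (-1,
        [Sum.inr (Sum.inr ()), Sum.inl q0]
          ++ t.map (fun x => Sum.inr (Sum.inl x))
          ++ [Sum.inr (Sum.inr ())]
          ++ List.replicate (p n - 1) (Sum.inr (Sum.inl zero)))
      = [Sum.inr (Sum.inl zero), Sum.inl q0]
          ++ t.map (fun x => Sum.inr (Sum.inl x))
          ++ (a n).map (fun x => Sum.inr (Sum.inl x))) :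
    Set.InjOn (cgsApply (advicePairs q0 zero p) J (fun _ => 0))
      (SP (advicePairs q0 zero p)) :=
  advice_cgs_injective_general q0 zero p a ha ha0 J hJ
end
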